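/- Let ω, ω̃ : [0,T] → ℂ^{r×2r} be continuously differentiable functions each satisfying θ(x) J ω(x)* = 0, ω′(x) J ω(x)* = 0, and ω(0) = (1/√2)[−I_r I_r], where θ is the top block of the fundamental solution at λ=0. Then ω = ω̃. -/

import Mathlib

open Set Matrix

attribute [local instance] Matrix.normedAddCommGroup Matrix.normedSpace

/-!
Along solutions of `-i j u' = H u` with `H` Hermitian the form `uᴴ j u` is constant, equal to
`Q j Qᴴ = J`; hence `u J uᴴ = j`, and the top rows satisfy `θ J θᴴ = 1`. In the same way
`ω' J ωᴴ = 0` keeps `ω J ωᴴ = -1`. The matrix `[θ; ω]` has `J`-Gram matrix `diag(1, -1)`, so it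
is invertible, and any `ω̃` that is `J`-orthogonal to `θ` is `g ω` with `g = -ω̃ J ωᴴ`. The
admissibility conditions on `ω` and `ω̃` kill both terms of `g'`, and `g(0) = 1`.
-/

namespace Matrix

noncomputable def conjTransposeCLM {m n : Type*} [Fintype m] [Fintype n] :
    Matrix m n ℂ →L[ℝ] Matrix n m ℂ :=
  LinearMap.toContinuousLinearMap
    { toFun := conjTranspose
      map_add' := conjTranspose_add
      map_smul' := fun c A => by simp [conjTranspose_smul] }

end Matrix

section Calculus

variable {l m n : Type*} [Fintype l] [Fintype m] [Fintype n] {s : Set ℝ} {x : ℝ}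

theorem HasDerivWithinAt.matrix_mul {f : ℝ → Matrix l m ℂ} {g : ℝ → Matrix m n ℂ}
    {f' : Matrix l m ℂ} {g' : Matrix m n ℂ}
    (hf : HasDerivWithinAt f f' s x) (hg : HasDerivWithinAt g g' s x) :
    HasDerivWithinAt (fun t => f t * g t) (f' * g x + f x * g') s x := by
  rw [add_comm]
  exact (mulLinearMap ℝ).toContinuousBilinearMap.hasDerivWithinAt_of_bilinear hf hg

theorem HasDerivWithinAt.matrix_conjTranspose {f : ℝ → Matrix m n ℂ} {f' : Matrix m n ℂ}
    (hf : HasDerivWithinAt f f' s x) :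
    HasDerivWithinAt (fun t => (f t)ᴴ) f'ᴴ s x :=
  (conjTransposeCLM.hasFDerivAt.comp_hasDerivWithinAt x hf :)

theorem HasDerivWithinAt.matrix_mul_mul_conjTranspose {f : ℝ → Matrix l m ℂ}
    {g : ℝ → Matrix n m ℂ} {f' : Matrix l m ℂ} {g' : Matrix n m ℂ} (A : Matrix m m ℂ)
    (hf : HasDerivWithinAt f f' s x) (hg : HasDerivWithinAt g g' s x) :
    HasDerivWithinAt (fun t => f t * A * (g t)ᴴ) (f' * A * (g x)ᴴ + f x * A * g'ᴴ) s x := by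
  simpa using (hf.matrix_mul (hasDerivWithinAt_const x s A)).matrix_mul hg.matrix_conjTranspose

end Calculus

theorem eq_of_hasDerivWithinAt_zero_Icc {E : Type*} [NormedAddCommGroup E] [NormedSpace ℝ E]
    {f : ℝ → E} {a b : ℝ} (hf : ∀ x ∈ Icc a b, HasDerivWithinAt f 0 (Icc a b) x) :
    ∀ x ∈ Icc a b, f x = f a :=
  constant_of_has_deriv_right_zero (fun x hx => (hf x hx).continuousWithinAt) fun x hx =>
    (hf x (Ico_subset_Icc_self hx)).mono_of_mem_nhdsWithin (Icc_mem_nhdsGE_of_mem hx)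

namespace Matrix

section Algebra

variable {α : Type*} [CommRing α] [StarRing α] {k l m n p : Type*}

theorem conjTranspose_mul_mul_conjTranspose [Fintype n] {J : Matrix n n α} (hJ : Jᴴ = J)
    (A : Matrix m n α) (B : Matrix p n α) : (A * J * Bᴴ)ᴴ = B * J * Aᴴ := by
  rw [conjTranspose_mul, conjTranspose_mul, conjTranspose_conjTranspose, hJ, Matrix.mul_assoc]

theorem fromRows_mul_mul_conjTranspose_fromRows [Fintype n] (A : Matrix k n α)
    (B : Matrix l n α) (J : Matrix n n α) :
    fromRows A B * J * (fromRows A B)ᴴ =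
      fromBlocks (A * J * Aᴴ) (A * J * Bᴴ) (B * J * Aᴴ) (B * J * Bᴴ) := by
  rw [conjTranspose_fromRows_eq_fromCols_conjTranspose, fromRows_mul, fromRows_mul_fromCols]

theorem mul_mul_conjTranspose_eq_of_conjTranspose_mul_mul_eq [Fintype n] [DecidableEq n]
    {u J j : Matrix n n α} (hJ : J * J = 1) (hj : j * j = 1) (h : uᴴ * j * u = J) :
    u * J * uᴴ = j := by
  have hleft : (J * uᴴ * j) * u = 1 := by
    rw [Matrix.mul_assoc, Matrix.mul_assoc, ← Matrix.mul_assoc uᴴ, h, hJ]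
  calc u * J * uᴴ = u * (J * uᴴ * j) * j := by simp only [Matrix.mul_assoc, hj, Matrix.mul_one]
    _ = j := by rw [mul_eq_one_comm.mp hleft, Matrix.one_mul]

theorem eq_zero_of_mul_mul_conjTranspose_eq_zero [Fintype n] [DecidableEq n]
    {W J : Matrix n n α} (hW : IsUnit (W * J * Wᴴ)) {N : Matrix m n α}
    (hN : N * J * Wᴴ = 0) : N = 0 := by
  have hJW : IsUnit (J * Wᴴ).det := by
    rw [isUnit_iff_isUnit_det, Matrix.mul_assoc, det_mul] at hW
    exact isUnit_of_mul_isUnit_right hW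
  calc N = N * (J * Wᴴ) * (J * Wᴴ)⁻¹ := (mul_nonsing_inv_cancel_right _ N hJW).symm
    _ = 0 := by rw [← Matrix.mul_assoc, hN, Matrix.zero_mul]

theorem eq_neg_mul_mul_conjTranspose_mul [Fintype k] [Fintype l] [DecidableEq k]
    [DecidableEq l] {J : Matrix (k ⊕ l) (k ⊕ l) α} (hJ : Jᴴ = J) {θ : Matrix k (k ⊕ l) α}
    {ω : Matrix l (k ⊕ l) α} (hθθ : θ * J * θᴴ = 1) (hθω : θ * J * ωᴴ = 0)
    (hωω : ω * J * ωᴴ = -1) {η : Matrix m (k ⊕ l) α} (hθη : θ * J * ηᴴ = 0) :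
    η = -(η * J * ωᴴ) * ω := by
  have hωθ : ω * J * θᴴ = 0 := by
    rw [← conjTranspose_mul_mul_conjTranspose hJ, hθω, conjTranspose_zero]
  have hηθ : η * J * θᴴ = 0 := by
    rw [← conjTranspose_mul_mul_conjTranspose hJ, hθη, conjTranspose_zero]
  refine sub_eq_zero.mp
    (eq_zero_of_mul_mul_conjTranspose_eq_zero (W := fromRows θ ω) (J := J) ?_ ?_)
  · rw [fromRows_mul_mul_conjTranspose_fromRows, hθθ, hθω, hωθ, hωω]
    exact IsUnit.of_mul_eq_one (fromBlocks 1 0 0 (-1))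
      (by simp [fromBlocks_multiply, fromBlocks_one])
  · have hNθ : (η - -(η * J * ωᴴ) * ω) * J * θᴴ = 0 := by
      rw [Matrix.sub_mul, Matrix.sub_mul, hηθ, Matrix.mul_assoc _ ω,
        Matrix.mul_assoc _ (ω * J), hωθ]
      simp
    have hNω : (η - -(η * J * ωᴴ) * ω) * J * ωᴴ = 0 := by
      rw [Matrix.sub_mul, Matrix.sub_mul, Matrix.mul_assoc _ ω, Matrix.mul_assoc _ (ω * J), hωω]
      simp
    rw [conjTranspose_fromRows_eq_fromCols_conjTranspose, mul_fromCols, hNθ, hNω, fromCols_zero]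

end Algebra

section Blocks

variable {k m n : Type*}

theorem inv_sqrt_two_smul_mul_mul_conjTranspose_smul [Fintype n] (A : Matrix k n ℂ)
    (J : Matrix n n ℂ) (B : Matrix m n ℂ) :
    ((Real.sqrt 2 : ℂ)⁻¹ • A) * J * ((Real.sqrt 2 : ℂ)⁻¹ • B)ᴴ =
      (2 : ℂ)⁻¹ • (A * J * Bᴴ) := by
  have hc : star ((Real.sqrt 2 : ℂ)⁻¹) = (Real.sqrt 2 : ℂ)⁻¹ := by simp [Complex.conj_ofReal]
  have hcc : (Real.sqrt 2 : ℂ)⁻¹ * (Real.sqrt 2 : ℂ)⁻¹ = (2 : ℂ)⁻¹ := by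
    rw [← mul_inv, ← Complex.ofReal_mul, Real.mul_self_sqrt zero_le_two, Complex.ofReal_ofNat]
  rw [conjTranspose_smul, hc, Matrix.smul_mul, Matrix.smul_mul, Matrix.mul_smul, smul_smul, hcc]

variable [Fintype m] [DecidableEq m]

theorem smul_fromBlocks_mul_fromBlocks_mul_conjTranspose :
    ((Real.sqrt 2 : ℂ)⁻¹ • (fromBlocks 1 (-1) 1 1 : Matrix (m ⊕ m) (m ⊕ m) ℂ)) *
        (fromBlocks 1 0 0 (-1) : Matrix (m ⊕ m) (m ⊕ m) ℂ) *
        ((Real.sqrt 2 : ℂ)⁻¹ • (fromBlocks 1 (-1) 1 1 : Matrix (m ⊕ m) (m ⊕ m) ℂ))ᴴ =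
      fromBlocks 0 1 1 0 := by
  rw [inv_sqrt_two_smul_mul_mul_conjTranspose_smul]
  simp only [fromBlocks_multiply, mul_one, mul_zero, add_zero, mul_neg, neg_neg, zero_add,
    fromBlocks_conjTranspose, conjTranspose_one, conjTranspose_neg, add_neg_cancel,
    fromBlocks_smul, smul_zero, smul_add, fromBlocks_inj, and_true, and_self, true_and]
  module

theorem smul_fromCols_mul_fromBlocks_mul_conjTranspose :
    ((Real.sqrt 2 : ℂ)⁻¹ • (fromCols (-1) 1 : Matrix m (m ⊕ m) ℂ)) *
        (fromBlocks 0 1 1 0 : Matrix (m ⊕ m) (m ⊕ m) ℂ) *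
        ((Real.sqrt 2 : ℂ)⁻¹ • (fromCols (-1) 1 : Matrix m (m ⊕ m) ℂ))ᴴ = -1 := by
  rw [inv_sqrt_two_smul_mul_mul_conjTranspose_smul]
  simp only [fromCols_mul_fromBlocks, mul_zero, mul_one, zero_add, add_zero,
    conjTranspose_fromCols_eq_fromRows_conjTranspose, conjTranspose_neg, conjTranspose_one,
    fromCols_mul_fromRows, mul_neg, smul_add, smul_neg]
  module

end Blocks

end Matrix

section Evolution

variable {l m n : Type*} [Fintype l] [Fintype m] [Fintype n] {a b : ℝ}

theorem mul_mul_conjTranspose_eq_of_hasDerivWithinAt {ρ ρ' : ℝ → Matrix m n ℂ}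
    {J : Matrix n n ℂ} (hJ : Jᴴ = J)
    (hρ : ∀ x ∈ Icc a b, HasDerivWithinAt ρ (ρ' x) (Icc a b) x)
    (hρ' : ∀ x ∈ Icc a b, ρ' x * J * (ρ x)ᴴ = 0) :
    ∀ x ∈ Icc a b, ρ x * J * (ρ x)ᴴ = ρ a * J * (ρ a)ᴴ := by
  refine eq_of_hasDerivWithinAt_zero_Icc fun x hx => ?_
  have h := (hρ x hx).matrix_mul_mul_conjTranspose J (hρ x hx)
  rwa [← conjTranspose_mul_mul_conjTranspose hJ (ρ' x), hρ' x hx, conjTranspose_zero,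
    add_zero] at h

theorem conjTranspose_mul_mul_eq_of_hasDerivWithinAt {u u' : ℝ → Matrix n m ℂ}
    {j : Matrix n n ℂ} (hj : jᴴ = j) {H : ℝ → Matrix n n ℂ}
    (hH : ∀ x ∈ Icc a b, (H x)ᴴ = H x)
    (hu : ∀ x ∈ Icc a b, HasDerivWithinAt u (u' x) (Icc a b) x)
    (heq : ∀ x ∈ Icc a b, (-Complex.I) • (j * u' x) = H x * u x) :
    ∀ x ∈ Icc a b, (u x)ᴴ * j * u x = (u a)ᴴ * j * u a := by
  refine eq_of_hasDerivWithinAt_zero_Icc fun x hx => ?_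
  have h := (hu x hx).matrix_conjTranspose.matrix_mul_mul_conjTranspose j
    (hu x hx).matrix_conjTranspose
  simp only [conjTranspose_conjTranspose] at h
  have hju : j * u' x = Complex.I • (H x * u x) := by
    rw [← heq x hx, smul_smul]
    simp
  have hform : (u x)ᴴ * j * u' x = Complex.I • ((u x)ᴴ * H x * u x) := by
    rw [Matrix.mul_assoc, hju, Matrix.mul_smul, Matrix.mul_assoc]
  have hform' : (u' x)ᴴ * j * u x = (-Complex.I) • ((u x)ᴴ * H x * u x) := by
    simpa [conjTranspose_mul, Matrix.mul_assoc, hj, hH x hx] using congrArg conjTranspose hform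
  rwa [hform, hform', ← add_smul, neg_add_cancel, zero_smul] at h

end Evolution

section Admissible

variable {k l n : Type*} [Fintype l] [Fintype n] {a b : ℝ}

structure IsAdmissible (J : Matrix n n ℂ) (θ : ℝ → Matrix k n ℂ) (a b : ℝ)
    (ω ω' : ℝ → Matrix l n ℂ) : Prop where
  hasDerivWithinAt : ∀ x ∈ Icc a b, HasDerivWithinAt ω (ω' x) (Icc a b) x
  orthogonal : ∀ x ∈ Icc a b, θ x * J * (ω x)ᴴ = 0
  deriv_orthogonal : ∀ x ∈ Icc a b, ω' x * J * (ω x)ᴴ = 0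

theorem IsAdmissible.eqOn [Fintype k] [DecidableEq k] [DecidableEq l]
    {J : Matrix (k ⊕ l) (k ⊕ l) ℂ} (hJ : Jᴴ = J) {θ : ℝ → Matrix k (k ⊕ l) ℂ}
    (hθ : ∀ x ∈ Icc a b, θ x * J * (θ x)ᴴ = 1) {ω ω' η η' : ℝ → Matrix l (k ⊕ l) ℂ}
    (hω : IsAdmissible J θ a b ω ω') (hη : IsAdmissible J θ a b η η')
    (hωa : ω a * J * (ω a)ᴴ = -1) (hηa : η a = ω a) : EqOn ω η (Icc a b) := by
  have hωω : ∀ x ∈ Icc a b, ω x * J * (ω x)ᴴ = -1 := fun x hx =>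
    (mul_mul_conjTranspose_eq_of_hasDerivWithinAt hJ hω.hasDerivWithinAt
      hω.deriv_orthogonal x hx).trans hωa
  have hηη : ∀ x ∈ Icc a b, η x * J * (η x)ᴴ = -1 := fun x hx =>
    (mul_mul_conjTranspose_eq_of_hasDerivWithinAt hJ hη.hasDerivWithinAt
      hη.deriv_orthogonal x hx).trans (hηa ▸ hωa)
  have hηω : ∀ x ∈ Icc a b, η x = -(η x * J * (ω x)ᴴ) * ω x := fun x hx =>
    eq_neg_mul_mul_conjTranspose_mul hJ (hθ x hx) (hω.orthogonal x hx) (hωω x hx)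
      (hη.orthogonal x hx)
  have hωη : ∀ x ∈ Icc a b, ω x = -(ω x * J * (η x)ᴴ) * η x := fun x hx =>
    eq_neg_mul_mul_conjTranspose_mul hJ (hθ x hx) (hη.orthogonal x hx) (hηη x hx)
      (hω.orthogonal x hx)
  have hη'ω : ∀ x ∈ Icc a b, η' x * J * (ω x)ᴴ = 0 := fun x hx => by
    rw [hωη x hx, conjTranspose_mul, ← Matrix.mul_assoc, hη.deriv_orthogonal x hx,
      Matrix.zero_mul]
  have hω'η : ∀ x ∈ Icc a b, ω' x * J * (η x)ᴴ = 0 := fun x hx => by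
    rw [hηω x hx, conjTranspose_mul, ← Matrix.mul_assoc, hω.deriv_orthogonal x hx,
      Matrix.zero_mul]
  have hgauge : ∀ x ∈ Icc a b, -(η x * J * (ω x)ᴴ) = -(η a * J * (ω a)ᴴ) := by
    refine eq_of_hasDerivWithinAt_zero_Icc fun x hx => ?_
    have h := ((hη.hasDerivWithinAt x hx).matrix_mul_mul_conjTranspose J
      (hω.hasDerivWithinAt x hx)).neg
    rwa [hη'ω x hx, ← conjTranspose_mul_mul_conjTranspose hJ (ω' x), hω'η x hx,
      conjTranspose_zero, add_zero, neg_zero] at h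
  intro x hx
  rw [hηω x hx, hgauge x hx, hηa, hωa, neg_neg, Matrix.one_mul]

end Admissible

theorem stmt_6_general {r : ℕ} {T : ℝ}
    (v : ℝ → Matrix (Fin r) (Fin r) ℂ)
    (jm Jm Q : Matrix (Fin r ⊕ Fin r) (Fin r ⊕ Fin r) ℂ)
    (hj : jm = Matrix.fromBlocks (1 : Matrix (Fin r) (Fin r) ℂ) 0 0 (-1))
    (hJ : Jm = Matrix.fromBlocks (0 : Matrix (Fin r) (Fin r) ℂ) 1 1 0)
    (hQ : Q = ((Real.sqrt 2 : ℂ))⁻¹ • Matrix.fromBlocks 1 (-1) 1 1)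
    (u u' : ℝ → Matrix (Fin r ⊕ Fin r) (Fin r ⊕ Fin r) ℂ)
    (hder : ∀ x ∈ Icc (0:ℝ) T, HasDerivWithinAt u (u' x) (Icc 0 T) x)
    (heq : ∀ x ∈ Icc (0:ℝ) T,
      (-Complex.I) • (jm * u' x) = Matrix.fromBlocks 0 (v x) (v x)ᴴ 0 * u x)
    (hinit : u 0 = Qᴴ)
    (θ : ℝ → Matrix (Fin r) (Fin r ⊕ Fin r) ℂ)
    (hθ : ∀ x : ℝ, θ x = (u x).submatrix Sum.inl id)
    (ω ω' ωt ωt' : ℝ → Matrix (Fin r) (Fin r ⊕ Fin r) ℂ)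
    (hωder : ∀ x ∈ Icc (0:ℝ) T, HasDerivWithinAt ω (ω' x) (Icc 0 T) x)
    (hωtder : ∀ x ∈ Icc (0:ℝ) T, HasDerivWithinAt ωt (ωt' x) (Icc 0 T) x)
    (h1 : ∀ x ∈ Icc (0:ℝ) T, θ x * Jm * (ω x)ᴴ = 0)
    (h2 : ∀ x ∈ Icc (0:ℝ) T, ω' x * Jm * (ω x)ᴴ = 0)
    (h3 : ω 0 = ((Real.sqrt 2 : ℂ))⁻¹ • Matrix.fromCols (-1) 1)
    (h1t : ∀ x ∈ Icc (0:ℝ) T, θ x * Jm * (ωt x)ᴴ = 0)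
    (h2t : ∀ x ∈ Icc (0:ℝ) T, ωt' x * Jm * (ωt x)ᴴ = 0)
    (h3t : ωt 0 = ((Real.sqrt 2 : ℂ))⁻¹ • Matrix.fromCols (-1) 1) :
    ∀ x ∈ Icc (0:ℝ) T, ω x = ωt x := by
  have hJm : Jmᴴ = Jm := by rw [hJ]; simp [fromBlocks_conjTranspose]
  have hjm : jmᴴ = jm := by rw [hj]; simp [fromBlocks_conjTranspose]
  have hJJ : Jm * Jm = 1 := by rw [hJ]; simp [fromBlocks_multiply]
  have hjj : jm * jm = 1 := by rw [hj]; simp [fromBlocks_multiply]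
  have hu : ∀ x ∈ Icc (0:ℝ) T, u x * Jm * (u x)ᴴ = jm := fun x hx => by
    refine mul_mul_conjTranspose_eq_of_conjTranspose_mul_mul_eq hJJ hjj ?_
    rw [conjTranspose_mul_mul_eq_of_hasDerivWithinAt hjm
      (fun x _ => by simp [fromBlocks_conjTranspose]) hder heq x hx, hinit,
      conjTranspose_conjTranspose, hQ, hj, hJ, smul_fromBlocks_mul_fromBlocks_mul_conjTranspose]
  have hθθ : ∀ x ∈ Icc (0:ℝ) T, θ x * Jm * (θ x)ᴴ = 1 := fun x hx => by
    have h := hu x hx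
    rw [← fromRows_toRows (u x), fromRows_mul_mul_conjTranspose_fromRows, hj] at h
    exact hθ x ▸ (fromBlocks_inj.mp h).1
  have hωω : ω 0 * Jm * (ω 0)ᴴ = -1 := by
    rw [h3, hJ, smul_fromCols_mul_fromBlocks_mul_conjTranspose]
  exact fun x hx => IsAdmissible.eqOn hJm hθθ ⟨hωder, h1, h2⟩ ⟨hωtder, h1t, h2t⟩ hωω
    (h3t.trans h3.symm) hx

theorem stmt_6 {r : ℕ} (hr : 0 < r) {T : ℝ} (hT : 0 < T)
    (v : ℝ → Matrix (Fin r) (Fin r) ℂ) (hv : ContinuousOn v (Icc 0 T))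
    (jm Jm Q : Matrix (Fin r ⊕ Fin r) (Fin r ⊕ Fin r) ℂ)
    (hj : jm = Matrix.fromBlocks (1 : Matrix (Fin r) (Fin r) ℂ) 0 0 (-1))
    (hJ : Jm = Matrix.fromBlocks (0 : Matrix (Fin r) (Fin r) ℂ) 1 1 0)
    (hQ : Q = ((Real.sqrt 2 : ℂ))⁻¹ • Matrix.fromBlocks 1 (-1) 1 1)
    (u u' : ℝ → Matrix (Fin r ⊕ Fin r) (Fin r ⊕ Fin r) ℂ)
    (hder : ∀ x ∈ Icc (0:ℝ) T, HasDerivWithinAt u (u' x) (Icc 0 T) x)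
    (hcont : ContinuousOn u' (Icc 0 T))
    (heq : ∀ x ∈ Icc (0:ℝ) T,
      (-Complex.I) • (jm * u' x) = Matrix.fromBlocks 0 (v x) (v x)ᴴ 0 * u x)
    (hinit : u 0 = Qᴴ)
    (hinv : ∀ x ∈ Icc (0:ℝ) T, IsUnit (u x))
    (θ : ℝ → Matrix (Fin r) (Fin r ⊕ Fin r) ℂ)
    (hθ : ∀ x : ℝ, θ x = (u x).submatrix Sum.inl id)
    (ω ω' ωt ωt' : ℝ → Matrix (Fin r) (Fin r ⊕ Fin r) ℂ)
    (hωder : ∀ x ∈ Icc (0:ℝ) T, HasDerivWithinAt ω (ω' x) (Icc 0 T) x)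
    (hωcont : ContinuousOn ω' (Icc 0 T))
    (hωtder : ∀ x ∈ Icc (0:ℝ) T, HasDerivWithinAt ωt (ωt' x) (Icc 0 T) x)
    (hωtcont : ContinuousOn ωt' (Icc 0 T))
    (h1 : ∀ x ∈ Icc (0:ℝ) T, θ x * Jm * (ω x)ᴴ = 0)
    (h2 : ∀ x ∈ Icc (0:ℝ) T, ω' x * Jm * (ω x)ᴴ = 0)
    (h3 : ω 0 = ((Real.sqrt 2 : ℂ))⁻¹ • Matrix.fromCols (-1) 1)
    (h1t : ∀ x ∈ Icc (0:ℝ) T, θ x * Jm * (ωt x)ᴴ = 0)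
    (h2t : ∀ x ∈ Icc (0:ℝ) T, ωt' x * Jm * (ωt x)ᴴ = 0)
    (h3t : ωt 0 = ((Real.sqrt 2 : ℂ))⁻¹ • Matrix.fromCols (-1) 1) :
    ∀ x ∈ Icc (0:ℝ) T, ω x = ωt x :=
  stmt_6_general v jm Jm Q hj hJ hQ u u' hder heq hinit θ hθ ω ω' ωt ωt' hωder hωtder h1 h2 h3 h1t
    h2t h3t
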